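/- arXiv:2206.00407 — 2 statements merged into one kernel-verified Lean document; each statement's English description precedes it below -/
import Mathlib

section
/- Let k ≥ 1 and n ≥ 1, and let M be a real k × n matrix that is column-stochastic, i.e., every entry of M is nonnegative and each column of M sums to 1 (the entry M_{ji} represents the conditional probability p(a = a_j | y = y_i)). Then the map v ↦ M v is injective on the standard probability simplex {v ∈ ℝ^n : v_i ≥ 0 for all i, Σ_i v_i = 1} if and only if rank(M) = n. In other words, the distribution p(y|x) can be uniquely recovered from the transformed distribution p(a|x) = M p(y|x) if and only if rank(M) = n. -/
lemma rank_eq_iff_injective_mulVec (k n : ℕ) (M : Matrix (Fin k) (Fin n) ℝ) :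
    M.rank = n ↔ Function.Injective M.mulVec := by
  have h1 : Function.Injective M.mulVec ↔ LinearMap.ker M.mulVecLin = ⊥ := by
    rw [LinearMap.ker_eq_bot]
    rfl
  have h2 := LinearMap.finrank_range_add_finrank_ker M.mulVecLin
  rw [Module.finrank_fin_fun] at h2
  rw [h1, Matrix.rank]
  constructor
  · intro h
    have : Module.finrank ℝ (LinearMap.ker M.mulVecLin) = 0 := by omega
    exact Submodule.finrank_eq_zero.mp this
  · intro h
    rw [h] at h2
    simp only [finrank_bot] at h2
    omega

/-- For a column-stochastic real `k × n` matrix `M` (with `k ≥ 1`, `n ≥ 1`),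
the map `v ↦ M v` is injective on the standard probability simplex of `ℝ^n`
if and only if `rank M = n`. -/
theorem column_stochastic_injOn_simplex_iff_rank_eq
    (k n : ℕ) (hk : 1 ≤ k) (hn : 1 ≤ n)
    (M : Matrix (Fin k) (Fin n) ℝ)
    (hnonneg : ∀ j i, 0 ≤ M j i)
    (hcol : ∀ i, ∑ j, M j i = 1) :
    Set.InjOn M.mulVec (stdSimplex ℝ (Fin n)) ↔ M.rank = n := by
  rw [rank_eq_iff_injective_mulVec]
  constructor
  · intro hinj
    rw [show Function.Injective M.mulVec ↔ LinearMap.ker M.mulVecLin = ⊥ from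
      by rw [LinearMap.ker_eq_bot]; rfl, Submodule.eq_bot_iff]
    intro v hv
    rw [LinearMap.mem_ker] at hv
    change M.mulVec v = 0 at hv
    have h0 : ∑ j, M.mulVec v j = 0 := by rw [hv]; simp
    have hsum : ∑ i, v i = 0 := by
      rw [← h0]
      simp only [Matrix.mulVec, dotProduct]
      rw [Finset.sum_comm]
      simp [← Finset.sum_mul, hcol]
    -- construct two simplex points
    set ε : ℝ := 1 / (n * (‖v‖ + 1)) with hε
    have hnpos : (0:ℝ) < n := by exact_mod_cast hn
    have hvnorm : (0:ℝ) ≤ ‖v‖ := norm_nonneg v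
    have hεpos : 0 < ε := by positivity
    have hbound : ∀ i, |v i| ≤ ‖v‖ := fun i => by
      simpa using norm_le_pi_norm v i
    set u : Fin n → ℝ := fun _ => 1 / n with hu
    set w : Fin n → ℝ := u + ε • v with hw
    have humem : u ∈ stdSimplex ℝ (Fin n) := by
      constructor
      · intro i; positivity
      · simp [hu]
        field_simp
    have hwmem : w ∈ stdSimplex ℝ (Fin n) := by
      constructor
      · intro i
        have h1 : |v i| ≤ ‖v‖ := hbound i
        have h2 : ε * (‖v‖ + 1) = 1 / n := by
          rw [hε]; field_simp
        have : ε * |v i| < 1 / n := by nlinarith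
        have habs : -(ε * |v i|) ≤ ε * v i := by
          have := neg_abs_le (v i)
          nlinarith
        simp only [hw, hu, Pi.add_apply, Pi.smul_apply, smul_eq_mul]
        linarith
      · simp only [hw, hu, Pi.add_apply, Pi.smul_apply, smul_eq_mul]
        rw [Finset.sum_add_distrib, ← Finset.mul_sum, hsum]
        simp
        field_simp
    have himg : M.mulVec w = M.mulVec u := by
      rw [hw, Matrix.mulVec_add, Matrix.mulVec_smul, hv]
      simp
    have := hinj hwmem humem himg
    have hzero : ε • v = 0 := by
      have h' : u + ε • v = u := this
      have := congrArg (· - u) h'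
      simpa [add_sub_cancel_left] using this
    exact (smul_eq_zero.mp hzero).resolve_left (ne_of_gt hεpos)
  · intro h a _ b _ hab
    exact h hab
end

section
/- Let M be a real k × n column-stochastic matrix (all entries nonnegative, each column summing to 1) with rank(M) = n, and let p be a vector in the standard probability simplex of ℝ^n. Consider the proxy cross-entropy loss L(q) = −Σ_{j : (M p)_j > 0} (M p)_j · log (M q)_j defined for probability vectors q in the simplex of ℝ^n such that (M q)_j > 0 whenever (M p)_j > 0. Then L(q) ≥ L(p) for all such q, with equality if and only if q = p; i.e., the proxy feedback loss built from the true action model M is uniquely minimized at the true conversion distribution p. -/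
private lemma mulVec_injective_of_rank (k n : ℕ) (M : Matrix (Fin k) (Fin n) ℝ)
    (hrank : M.rank = n) : Function.Injective M.mulVec := by
  have h := M.mulVecLin.finrank_range_add_finrank_ker
  rw [Matrix.rank] at hrank
  have hd : Module.finrank ℝ (Fin n → ℝ) = n := by simp
  rw [hrank, hd] at h
  have hker : Module.finrank ℝ (LinearMap.ker M.mulVecLin) = 0 := by omega
  rw [Submodule.finrank_eq_zero] at hker
  have := LinearMap.ker_eq_bot.mp hker
  exact this

private lemma mulVec_sum_one (k n : ℕ) (M : Matrix (Fin k) (Fin n) ℝ)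
    (hcol : ∀ i, ∑ j, M j i = 1) (v : Fin n → ℝ) (hv : v ∈ stdSimplex ℝ (Fin n)) :
    ∑ j, M.mulVec v j = 1 := by
  simp only [Matrix.mulVec, dotProduct]
  rw [Finset.sum_comm]
  have : ∀ i, ∑ j, M j i * v i = v i := by
    intro i; rw [← Finset.sum_mul, hcol i, one_mul]
  simp only [this]
  exact hv.2

open Classical in
/-- For a column-stochastic real `k × n` matrix `M` with `rank M = n`
and a probability vector `p`, the proxy cross-entropy loss
`L(q) = -∑_{j : (M p)_j > 0} (M p)_j log (M q)_j` over probability vectors `q`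
(with `(M q)_j > 0` whenever `(M p)_j > 0`) satisfies `L(q) ≥ L(p)`,
with equality iff `q = p`. -/
theorem proxy_cross_entropy_uniquely_minimized_at_target
    (k n : ℕ)
    (M : Matrix (Fin k) (Fin n) ℝ)
    (hnonneg : ∀ j i, 0 ≤ M j i)
    (hcol : ∀ i, ∑ j, M j i = 1)
    (hrank : M.rank = n)
    (p : Fin n → ℝ) (hp : p ∈ stdSimplex ℝ (Fin n)) :
    ∀ q ∈ stdSimplex ℝ (Fin n),
      (∀ j, 0 < M.mulVec p j → 0 < M.mulVec q j) →
      (-∑ j ∈ Finset.univ.filter (fun j => 0 < M.mulVec p j),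
          M.mulVec p j * Real.log (M.mulVec q j)) ≥
        (-∑ j ∈ Finset.univ.filter (fun j => 0 < M.mulVec p j),
          M.mulVec p j * Real.log (M.mulVec p j)) ∧
      ((-∑ j ∈ Finset.univ.filter (fun j => 0 < M.mulVec p j),
          M.mulVec p j * Real.log (M.mulVec q j)) =
        (-∑ j ∈ Finset.univ.filter (fun j => 0 < M.mulVec p j),
          M.mulVec p j * Real.log (M.mulVec p j)) ↔ q = p) := by
  intro q hq hpos
  set r := M.mulVec p with hrdef
  set s := M.mulVec q with hsdef
  set S := Finset.univ.filter (fun j => 0 < r j) with hSdef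
  have hrnn : ∀ j, 0 ≤ r j := by
    intro j; rw [hrdef]; simp only [Matrix.mulVec, dotProduct]
    exact Finset.sum_nonneg fun i _ => mul_nonneg (hnonneg j i) (hp.1 i)
  have hsnn : ∀ j, 0 ≤ s j := by
    intro j; rw [hsdef]; simp only [Matrix.mulVec, dotProduct]
    exact Finset.sum_nonneg fun i _ => mul_nonneg (hnonneg j i) (hq.1 i)
  have hrsum : ∑ j, r j = 1 := mulVec_sum_one k n M hcol p hp
  have hssum : ∑ j, s j = 1 := mulVec_sum_one k n M hcol q hq
  have hrS : ∑ j ∈ S, r j = 1 := by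
    rw [hSdef, Finset.sum_filter_of_ne (fun j _ hne => lt_of_le_of_ne (hrnn j) (Ne.symm hne))]
    exact hrsum
  have hsS : ∑ j ∈ S, s j ≤ 1 := by
    rw [← hssum]
    exact Finset.sum_le_sum_of_subset_of_nonneg (Finset.subset_univ S)
      (fun j _ _ => hsnn j)
  -- per-term inequality
  have key : ∀ j ∈ S, r j * Real.log (s j) - r j * Real.log (r j) ≤ s j - r j := by
    intro j hj
    have hrj : 0 < r j := (Finset.mem_filter.mp hj).2
    have hsj : 0 < s j := hpos j hrj
    have hlog : Real.log (s j / r j) ≤ s j / r j - 1 :=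
      Real.log_le_sub_one_of_pos (div_pos hsj hrj)
    rw [Real.log_div (ne_of_gt hsj) (ne_of_gt hrj)] at hlog
    have := mul_le_mul_of_nonneg_left hlog (le_of_lt hrj)
    calc r j * Real.log (s j) - r j * Real.log (r j)
        = r j * (Real.log (s j) - Real.log (r j)) := by ring
      _ ≤ r j * (s j / r j - 1) := this
      _ = s j - r j := by field_simp
  have hsum_key : ∑ j ∈ S, (r j * Real.log (s j) - r j * Real.log (r j)) ≤
      ∑ j ∈ S, (s j - r j) := Finset.sum_le_sum key
  have hsr : ∑ j ∈ S, (s j - r j) ≤ 0 := by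
    rw [Finset.sum_sub_distrib, hrS]; linarith
  have hmain : ∑ j ∈ S, r j * Real.log (s j) ≤ ∑ j ∈ S, r j * Real.log (r j) := by
    rw [Finset.sum_sub_distrib] at hsum_key
    linarith
  refine ⟨by simpa [hSdef] using neg_le_neg hmain, ?_, ?_⟩
  · -- equality → q = p
    intro heq
    have heq' : ∑ j ∈ S, r j * Real.log (s j) = ∑ j ∈ S, r j * Real.log (r j) := by
      have := neg_injective heq
      simpa [hSdef] using this
    have hzero : ∑ j ∈ S, (r j * Real.log (s j) - r j * Real.log (r j)) = 0 := by
      rw [Finset.sum_sub_distrib, heq']; ring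
    have hsr0 : ∑ j ∈ S, (s j - r j) = 0 := le_antisymm hsr (hzero ▸ hsum_key)
    -- each term equality
    have hterm : ∀ j ∈ S, r j * Real.log (s j) - r j * Real.log (r j) = s j - r j := by
      by_contra hc
      push_neg at hc
      obtain ⟨j0, hj0, hne⟩ := hc
      have hlt : r j0 * Real.log (s j0) - r j0 * Real.log (r j0) < s j0 - r j0 :=
        lt_of_le_of_ne (key j0 hj0) hne
      have := Finset.sum_lt_sum (fun j hj => key j hj) ⟨j0, hj0, hlt⟩
      rw [hzero, hsr0] at this
      exact lt_irrefl 0 this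
    have hsr_eq : ∀ j ∈ S, s j = r j := by
      intro j hj
      have hrj : 0 < r j := (Finset.mem_filter.mp hj).2
      have hsj : 0 < s j := hpos j hrj
      by_contra hne
      have hx : s j / r j ≠ 1 := by
        intro h; exact hne (by field_simp at h; linarith)
      have hlog : Real.log (s j / r j) < s j / r j - 1 :=
        Real.log_lt_sub_one_of_pos (div_pos hsj hrj) hx
      rw [Real.log_div (ne_of_gt hsj) (ne_of_gt hrj)] at hlog
      have h2 := mul_lt_mul_of_pos_left hlog hrj
      have h3 : r j * (s j / r j - 1) = s j - r j := by field_simp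
      have h4 := hterm j hj
      nlinarith [h4]
    -- off-support: s j = 0 = r j
    have hsSsum : ∑ j ∈ S, s j = 1 := by
      have := Finset.sum_congr rfl hsr_eq
      rw [this, hrS]
    have hcompl : ∑ j ∈ Finset.univ \ S, s j = 0 := by
      have h5 : ∑ j ∈ Finset.univ \ S, s j + ∑ j ∈ S, s j = ∑ j, s j :=
        Finset.sum_sdiff (Finset.subset_univ S)
      rw [hssum, hsSsum] at h5
      linarith
    have hsz : ∀ j ∈ Finset.univ \ S, s j = 0 := by
      intro j hj
      exact (Finset.sum_eq_zero_iff_of_nonneg (fun i _ => hsnn i)).mp hcompl j hj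
    have hseqr : s = r := by
      funext j
      by_cases hj : j ∈ S
      · exact hsr_eq j hj
      · have hjm : j ∈ Finset.univ \ S := Finset.mem_sdiff.mpr ⟨Finset.mem_univ j, hj⟩
        have hs0 : s j = 0 := hsz j hjm
        have hr0 : r j = 0 := by
          by_contra h
          exact hj (Finset.mem_filter.mpr ⟨Finset.mem_univ j,
            lt_of_le_of_ne (hrnn j) (Ne.symm h)⟩)
        rw [hs0, hr0]
    exact mulVec_injective_of_rank k n M hrank hseqr
  · rintro rfl
    rfl
end
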